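/- arXiv:1912.01887 — 3 statements merged into one kernel-verified Lean document; each statement's English description precedes it below -/
import Mathlib

section
/- Let ω ∈ D = D̂ ∩ Ď be a radial weight. Then there exist constants 0 < a < b < ∞ and C ≥ 1 such that for all 0 ≤ t ≤ s < 1: C⁻¹ ((1−s)/(1−t))^b ≤ ω̂(s)/ω̂(t) ≤ C ((1−s)/(1−t))^a. In particular ω̂(t)/(1−t)^b → ∞ and ω̂(t)/(1−t)^a → 0 as t → 1⁻. -/
open MeasureTheory Filter Set Complex ENNReal

noncomputable section

/-- The open unit disk in `ℂ`. -/
def uD : Set ℂ := Metric.ball 0 1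

/-- The normalized Lebesgue area measure `dA` on `ℂ` (Lebesgue measure divided by `π`,
so that the unit disk has measure `1`). -/
def mA : Measure ℂ := ENNReal.ofReal (1 / Real.pi) • (volume : Measure ℂ)

/-- `ω̂(r) = ∫_r^1 ω(s) ds` for a radial weight profile `ω : ℝ → ℝ`. -/
def wHat (ω : ℝ → ℝ) (r : ℝ) : ℝ := ∫ s in r..(1:ℝ), ω s

/-- A radial weight, identified with its radial profile: positive on `[0,1)` and integrable. -/
def IsRadialWeight (ω : ℝ → ℝ) : Prop :=
  (∀ r ∈ Ico (0:ℝ) 1, 0 < ω r) ∧ IntervalIntegrable ω volume 0 1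

/-- `ω ∈ D̂`: doubling. -/
def IsDoubling (ω : ℝ → ℝ) : Prop :=
  ∃ C : ℝ, 0 < C ∧ ∀ r ∈ Ico (0:ℝ) 1, wHat ω r ≤ C * wHat ω ((1 + r) / 2)

/-- `ω ∈ Ď`: reverse doubling. -/
def IsRevDoubling (ω : ℝ → ℝ) : Prop :=
  ∃ K : ℝ, 1 < K ∧ ∃ C : ℝ, 1 < C ∧ ∀ r ∈ Ico (0:ℝ) 1,
    C * wHat ω (1 - (1 - r) / K) ≤ wHat ω r

/-- `ω ∈ D = D̂ ∩ Ď`. -/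
def IsDD (ω : ℝ → ℝ) : Prop := IsDoubling ω ∧ IsRevDoubling ω

/-- The moment `ω_n = ∫_0^1 r^n ω(r) dr`. -/
def wMom (ω : ℝ → ℝ) (n : ℕ) : ℝ := ∫ r in (0:ℝ)..1, r ^ n * ω r

/-- The Bergman reproducing kernel `B_z^ω(w) = (1/2) Σ_k (w z̄)^k / ω_{2k+1}`. -/
def wBk (ω : ℝ → ℝ) (z w : ℂ) : ℂ :=
  (1 / 2) * ∑' k : ℕ, (w * (starRingEnd ℂ) z) ^ k / (wMom ω (2 * k + 1) : ℂ)

/-- The diagonal value `B_z^ω(z) = Σ_k |z|^{2k} / (2 ω_{2k+1}) = ‖B_z^ω‖²`. -/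
def wBkDiag (ω : ℝ → ℝ) (z : ℂ) : ℝ :=
  ∑' k : ℕ, ‖z‖ ^ (2 * k) / (2 * wMom ω (2 * k + 1))

/-- Pseudo-hyperbolic distance `ρ(z,w)`. -/
def pRho (z w : ℂ) : ℝ := ‖(z - w) / (1 - (starRingEnd ℂ) z * w)‖

/-- The Bergman metric `β(z,w)`. -/
def bDist (z w : ℂ) : ℝ := (1 / 2) * Real.log ((1 + pRho z w) / (1 - pRho z w))

/-- The Bergman disk `D(z,r)`. -/
def bDisk (z : ℂ) (r : ℝ) : Set ℂ := {w ∈ uD | bDist z w < r}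

/-- The annulus `Λ_k = {z : 1 - 2⁻ᵏ ≤ |z| < 1 - 2⁻ᵏ⁻¹}`. -/
def annl (k : ℕ) : Set ℂ :=
  {z : ℂ | 1 - 1 / 2 ^ k ≤ ‖z‖ ∧ ‖z‖ < 1 - 1 / 2 ^ (k + 1)}

/-- The Möbius invariant measure `dλ(z) = dA(z)/(1-|z|²)²` on the unit disk. -/
def mLam : Measure ℂ :=
  (mA.restrict uD).withDensity fun z => ENNReal.ofReal (1 / (1 - ‖z‖ ^ 2) ^ 2)

/-- `L^p` norm with respect to `λ` restricted to a set, for `0 < p ≤ ∞`. -/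
def eLpLam (p : ℝ≥0∞) (f : ℂ → ℝ≥0∞) (s : Set ℂ) : ℝ≥0∞ :=
  if p = ∞ then essSup f (mLam.restrict s)
  else (∫⁻ z in s, f z ^ p.toReal ∂mLam) ^ (1 / p.toReal)

/-- `ℓ^q` norm of a sequence in `[0,∞]`, for `0 ≤ q ≤ ∞`, where `q = 0` means `limsup`. -/
def lqN (q : ℝ≥0∞) (a : ℕ → ℝ≥0∞) : ℝ≥0∞ :=
  if q = 0 then Filter.limsup a Filter.atTop
  else if q = ∞ then ⨆ k, a k
  else (∑' k, a k ^ q.toReal) ^ (1 / q.toReal)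

/-- `ℓ^p` norm of a sequence in `[0,∞]`, for `0 < p ≤ ∞`. -/
def lpN (p : ℝ≥0∞) (a : ℕ → ℝ≥0∞) : ℝ≥0∞ :=
  if p = ∞ then ⨆ j, a j else (∑' j, a j ^ p.toReal) ^ (1 / p.toReal)

/-- The Herz norm `‖f‖_{K_q^p(λ)}`. -/
def herzN (p q : ℝ≥0∞) (f : ℂ → ℝ≥0∞) : ℝ≥0∞ := lqN q fun k => eLpLam p f (annl k)

/-- `μ̂_r(z) = μ(D(z,r)) / ((1-|z|) ω̂(z))`. -/
def muHat (ω : ℝ → ℝ) (μ : Measure ℂ) (r : ℝ) (z : ℂ) : ℝ≥0∞ :=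
  μ (bDisk z r) / ENNReal.ofReal ((1 - ‖z‖) * wHat ω (‖z‖))

/-- The Berezin transform `T̃_μ(z) = (1/B_z^ω(z)) ∫_𝔻 |B_z^ω(w)|² dμ(w)`. -/
def berezin (ω : ℝ → ℝ) (μ : Measure ℂ) (z : ℂ) : ℝ≥0∞ :=
  (∫⁻ w, ENNReal.ofReal (‖wBk ω z w‖ ^ 2) ∂μ) / ENNReal.ofReal (wBkDiag ω z)

/-- `B_ω f(z) = (1/B_z^ω(z)) ∫_𝔻 f(w) |B_z^ω(w)|² ω̂(w)/(1-|w|) dA(w)` for `f ≥ 0`. -/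
def Bop (ω : ℝ → ℝ) (f : ℂ → ℝ≥0∞) (z : ℂ) : ℝ≥0∞ :=
  (∫⁻ w in uD, f w *
      ENNReal.ofReal (‖wBk ω z w‖ ^ 2 * wHat ω (‖w‖) / (1 - ‖w‖))
      ∂mA) / ENNReal.ofReal (wBkDiag ω z)

/-- The `A_ω²` norm of a function on the disk. -/
def a2Norm (ω : ℝ → ℝ) (f : ℂ → ℂ) : ℝ≥0∞ :=
  (∫⁻ z in uD, ENNReal.ofReal (‖f z‖ ^ 2 * ω (‖z‖)) ∂mA) ^ (1 / 2 : ℝ)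

/-- Membership in the Bergman space `A_ω²`: analytic on the disk with finite norm. -/
def MemA2 (ω : ℝ → ℝ) (f : ℂ → ℂ) : Prop :=
  AnalyticOnNhd ℂ f uD ∧ a2Norm ω f < ∞

/-- Operator norm on `A_ω²` of a (not necessarily linear) map `T`. -/
def opNormA2 (ω : ℝ → ℝ) (T : (ℂ → ℂ) → ℂ → ℂ) : ℝ≥0∞ :=
  ⨆ f ∈ {f : ℂ → ℂ | MemA2 ω f ∧ a2Norm ω f ≤ 1}, a2Norm ω (T f)

/-- `R` is linear on `A_ω²` (as functions on the disk). -/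
def LinOnA2 (ω : ℝ → ℝ) (R : (ℂ → ℂ) → ℂ → ℂ) : Prop :=
  ∀ f g : ℂ → ℂ, MemA2 ω f → MemA2 ω g → ∀ a b : ℂ, ∀ z ∈ uD,
    R (fun w => a * f w + b * g w) z = a * R f z + b * R g z

/-- `R` has rank at most `j` on `A_ω²`: its range (on the disk) lies in the span of
`j` functions. -/
def RankLE (ω : ℝ → ℝ) (R : (ℂ → ℂ) → ℂ → ℂ) (j : ℕ) : Prop :=
  ∃ g : Fin j → ℂ → ℂ, ∀ f : ℂ → ℂ, MemA2 ω f →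
    ∃ c : Fin j → ℂ, ∀ z ∈ uD, R f z = ∑ i : Fin j, c i * g i z

/-- The `j`-th approximation number `λ_j(T) = inf {‖T - R‖ : rank R ≤ j}`. -/
def appNum (ω : ℝ → ℝ) (T : (ℂ → ℂ) → ℂ → ℂ) (j : ℕ) : ℝ≥0∞ :=
  ⨅ R ∈ {R : (ℂ → ℂ) → ℂ → ℂ |
      LinOnA2 ω R ∧ RankLE ω R j ∧ ∀ f, MemA2 ω f → MemA2 ω (R f)},
    opNormA2 ω fun f z => T f z - R f z

/-- The Schatten `p`-norm `‖T‖_{S_p}`, `0 < p ≤ ∞` (`p = ∞` being the operator norm). -/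
def schattenN (ω : ℝ → ℝ) (p : ℝ≥0∞) (T : (ℂ → ℂ) → ℂ → ℂ) : ℝ≥0∞ :=
  if p = ∞ then opNormA2 ω T
  else (∑' j : ℕ, appNum ω T j ^ p.toReal) ^ (1 / p.toReal)

/-- The Toeplitz operator `T_μ f(z) = ∫ f(ξ) conj(B_z^ω(ξ)) dμ(ξ)`. -/
def toep (ω : ℝ → ℝ) (μ : Measure ℂ) (f : ℂ → ℂ) (z : ℂ) : ℂ :=
  ∫ ξ, f ξ * (starRingEnd ℂ) (wBk ω z ξ) ∂μ

/-- The Schatten–Herz norm `‖T_μ‖_{S_{p,q}} = ‖{‖T_{μχ_k}‖_{S_p}}_k‖_{ℓ^q}`. -/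
def sHerzNorm (ω : ℝ → ℝ) (p q : ℝ≥0∞) (μ : Measure ℂ) : ℝ≥0∞ :=
  lqN q fun k => schattenN ω p (toep ω (μ.restrict (annl k)))

/-- `T_μ ∈ S_{p,q}`: each `T_{μχ_k}` maps `A_ω²` into itself, lies in `S_p`, and the
`ℓ^q` norm of the Schatten norms is finite. -/
def MemSpq (ω : ℝ → ℝ) (p q : ℝ≥0∞) (μ : Measure ℂ) : Prop :=
  (∀ k : ℕ, ∀ f, MemA2 ω f → MemA2 ω (toep ω (μ.restrict (annl k)) f)) ∧
  (∀ k : ℕ, schattenN ω p (toep ω (μ.restrict (annl k))) < ∞) ∧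
  sHerzNorm ω p q μ < ∞

/-- The dyadic polar rectangle `R_{j,k}`. -/
def Rjk (j k : ℕ) : Set ℂ :=
  {z ∈ uD | (∃ θ : ℝ, 2 * Real.pi * k / 2 ^ j ≤ θ ∧ θ < 2 * Real.pi * (k + 1) / 2 ^ j ∧
      z / (‖z‖ : ℂ) = Complex.exp ((θ : ℂ) * Complex.I)) ∧
    1 - 1 / 2 ^ j ≤ ‖z‖ ∧ ‖z‖ < 1 - 1 / 2 ^ (j + 1)}

/-! With `x = (1 - s) / (1 - t)`, iterate the doubling condition `n + 1` times where
`2 ^ n ≤ 1 / x < 2 ^ (n + 1)`: this gives `ω̂(t) ≤ D ^ (n + 1) ω̂(s)`, and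
`D ^ (-n) = (2 ^ (-n)) ^ (log₂ D) ≥ x ^ (log₂ D)`. Symmetrically, `m` iterations of reverse
doubling with `K ^ m ≤ 1 / x < K ^ (m + 1)` give
`ω̂(s) ≤ c ^ (-m) ω̂(t) ≤ c · x ^ (log_K c) ω̂(t)`.
The limits follow from the case `t = 0` after lowering `a` and raising `b`. -/

open Topology

namespace IsRadialWeight

variable {ω : ℝ → ℝ}

theorem intervalIntegrable (hω : IsRadialWeight ω) {t s : ℝ} (ht : t ∈ Icc (0:ℝ) 1)
    (hs : s ∈ Icc (0:ℝ) 1) : IntervalIntegrable ω volume t s := by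
  refine hω.2.mono_set (uIcc_subset_uIcc ?_ ?_) <;> rwa [uIcc_of_le zero_le_one]

theorem wHat_pos (hω : IsRadialWeight ω) {t : ℝ} (ht : t ∈ Ico (0:ℝ) 1) : 0 < wHat ω t :=
  intervalIntegral.intervalIntegral_pos_of_pos_on
    (hω.intervalIntegrable (Ico_subset_Icc_self ht) ⟨zero_le_one, le_rfl⟩)
    (fun u hu => hω.1 u ⟨ht.1.trans hu.1.le, hu.2⟩) ht.2

theorem antitoneOn_wHat (hω : IsRadialWeight ω) : AntitoneOn (wHat ω) (Ico 0 1) := by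
  intro t ht s hs hts
  have h1 : (1:ℝ) ∈ Icc (0:ℝ) 1 := ⟨zero_le_one, le_rfl⟩
  rw [wHat, wHat, ← intervalIntegral.integral_add_adjacent_intervals
    (hω.intervalIntegrable (Ico_subset_Icc_self ht) (Ico_subset_Icc_self hs))
    (hω.intervalIntegrable (Ico_subset_Icc_self hs) h1)]
  exact le_add_of_nonneg_left <| intervalIntegral.integral_nonneg hts
    fun u hu => (hω.1 u ⟨ht.1.trans hu.1, hu.2.trans_lt hs.2⟩).le

end IsRadialWeight

theorem one_sub_div_mem_Ico {t q : ℝ} (ht : t ∈ Ico (0:ℝ) 1) (hq : 1 ≤ q) :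
    1 - (1 - t) / q ∈ Ico (0:ℝ) 1 := by
  have hle : (1 - t) / q ≤ 1 - t := div_le_self (sub_nonneg.2 ht.2.le) hq
  have hpos : 0 < (1 - t) / q := div_pos (sub_pos.2 ht.2) (zero_lt_one.trans_le hq)
  constructor <;> linarith [ht.1]

theorem tendsto_one_sub_nhdsLT_one : Tendsto (fun t : ℝ => 1 - t) (𝓝[<] 1) (𝓝[>] 0) :=
  tendsto_nhdsWithin_of_tendsto_nhds_of_eventually_within _
    (by simpa using ((continuous_sub_left (1:ℝ)).tendsto 1).mono_left nhdsWithin_le_nhds)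
    (eventually_nhdsWithin_of_forall fun _ ht => mem_Ioi.2 (sub_pos.2 ht))

section PowerBounds

variable {f : ℝ → ℝ}

def HasPowerBounds (f : ℝ → ℝ) (a b C : ℝ) : Prop :=
  ∀ t s : ℝ, 0 ≤ t → t ≤ s → s < 1 →
    C⁻¹ * ((1 - s) / (1 - t)) ^ b ≤ f s / f t ∧ f s / f t ≤ C * ((1 - s) / (1 - t)) ^ a

theorem HasPowerBounds.mono {a b C a' b' : ℝ} (h : HasPowerBounds f a b C) (hC : 0 ≤ C)
    (ha : a' ≤ a) (hb : b ≤ b') : HasPowerBounds f a' b' C := by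
  intro t s ht hts hs
  have hx0 : 0 < (1 - s) / (1 - t) := div_pos (sub_pos.2 hs) (by linarith)
  have hx1 : (1 - s) / (1 - t) ≤ 1 := div_le_one_of_le₀ (by linarith) (by linarith)
  obtain ⟨hlow, hup⟩ := h t s ht hts hs
  exact ⟨(mul_le_mul_of_nonneg_left (Real.rpow_le_rpow_of_exponent_ge hx0 hx1 hb)
      (inv_nonneg.2 hC)).trans hlow,
    hup.trans (mul_le_mul_of_nonneg_left (Real.rpow_le_rpow_of_exponent_ge hx0 hx1 ha) hC)⟩

theorem HasPowerBounds.tendsto_div_rpow_atTop {a b C b' : ℝ} (h : HasPowerBounds f a b C)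
    (hC : 0 < C) (hf0 : 0 < f 0) (hb : b < b') :
    Tendsto (fun t => f t / (1 - t) ^ b') (𝓝[<] 1) atTop := by
  have hlim : Tendsto (fun t : ℝ => C⁻¹ * f 0 * (1 - t) ^ (b - b')) (𝓝[<] 1) atTop :=
    ((tendsto_rpow_neg_nhdsGT_zero (sub_neg.2 hb)).comp
      tendsto_one_sub_nhdsLT_one).const_mul_atTop (by positivity)
  refine tendsto_atTop_mono' _ ?_ hlim
  filter_upwards [Ioo_mem_nhdsLT zero_lt_one] with t ht
  have h1t : 0 < 1 - t := sub_pos.2 ht.2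
  have hlow := (h 0 t le_rfl ht.1.le ht.2).1
  rw [sub_zero, div_one, le_div_iff₀ hf0] at hlow
  rw [le_div_iff₀ (Real.rpow_pos_of_pos h1t _)]
  calc C⁻¹ * f 0 * (1 - t) ^ (b - b') * (1 - t) ^ b' = C⁻¹ * (1 - t) ^ b * f 0 := by
        rw [mul_assoc _ (_ ^ _), ← Real.rpow_add h1t, sub_add_cancel]; ring
    _ ≤ f t := hlow

theorem HasPowerBounds.tendsto_div_rpow_zero {a b C a' : ℝ} (h : HasPowerBounds f a b C)
    (hpos : ∀ r ∈ Ico (0:ℝ) 1, 0 < f r) (ha : a' < a) :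
    Tendsto (fun t => f t / (1 - t) ^ a') (𝓝[<] 1) (𝓝 0) := by
  have hlim : Tendsto (fun t : ℝ => C * f 0 * (1 - t) ^ (a - a')) (𝓝[<] 1) (𝓝 0) := by
    have h0 : Tendsto (fun u : ℝ => u ^ (a - a')) (𝓝 0) (𝓝 0) :=
      (Real.continuous_rpow_const (sub_nonneg.2 ha.le)).tendsto' 0 0
        (Real.zero_rpow (sub_pos.2 ha).ne')
    simpa using
      (h0.comp (tendsto_one_sub_nhdsLT_one.mono_right nhdsWithin_le_nhds)).const_mul (C * f 0)
  refine squeeze_zero' ?_ ?_ hlim <;> filter_upwards [Ioo_mem_nhdsLT zero_lt_one] with t ht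
  · have h1t : 0 < 1 - t := sub_pos.2 ht.2
    exact div_nonneg (hpos t ⟨ht.1.le, ht.2⟩).le (Real.rpow_nonneg h1t.le _)
  have h1t : 0 < 1 - t := sub_pos.2 ht.2
  have hup := (h 0 t le_rfl ht.1.le ht.2).2
  rw [sub_zero, div_one, div_le_iff₀ (hpos 0 ⟨le_rfl, zero_lt_one⟩)] at hup
  rw [div_le_iff₀ (Real.rpow_pos_of_pos h1t _)]
  calc f t ≤ C * (1 - t) ^ a * f 0 := hup
    _ = C * f 0 * (1 - t) ^ (a - a') * (1 - t) ^ a' := by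
        rw [mul_assoc (C * f 0), ← Real.rpow_add h1t, sub_add_cancel]; ring

theorem pow_rpow_logb {B x : ℝ} (hB : 1 < B) (hx : 0 < x) (n : ℕ) :
    (B ^ n) ^ Real.logb B x = x ^ n := by
  rw [← Real.rpow_natCast, ← Real.rpow_mul (by positivity), mul_comm,
    Real.rpow_mul (by positivity), Real.rpow_logb (by positivity) hB.ne' hx, Real.rpow_natCast]

theorem le_pow_mul_of_doubling {K D : ℝ} (hK : 1 ≤ K) (hD : 0 ≤ D)
    (hd : ∀ r ∈ Ico (0:ℝ) 1, f r ≤ D * f (1 - (1 - r) / K)) {t : ℝ}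
    (ht : t ∈ Ico (0:ℝ) 1) : ∀ n : ℕ, f t ≤ D ^ n * f (1 - (1 - t) / K ^ n)
  | 0 => by simp
  | n + 1 => by
    have hstep := hd _ (one_sub_div_mem_Ico ht (one_le_pow₀ hK (n := n)))
    rw [_root_.sub_sub_cancel, div_div, ← pow_succ] at hstep
    calc f t ≤ D ^ n * f (1 - (1 - t) / K ^ n) := le_pow_mul_of_doubling hK hD hd ht n
      _ ≤ D ^ n * (D * f (1 - (1 - t) / K ^ (n + 1))) := by gcongr
      _ = D ^ (n + 1) * f (1 - (1 - t) / K ^ (n + 1)) := by ring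

theorem pow_mul_le_of_revDoubling {K c : ℝ} (hK : 1 ≤ K) (hc : 0 ≤ c)
    (hrd : ∀ r ∈ Ico (0:ℝ) 1, c * f (1 - (1 - r) / K) ≤ f r) {t : ℝ}
    (ht : t ∈ Ico (0:ℝ) 1) : ∀ n : ℕ, c ^ n * f (1 - (1 - t) / K ^ n) ≤ f t
  | 0 => by simp
  | n + 1 => by
    have hstep := hrd _ (one_sub_div_mem_Ico ht (one_le_pow₀ hK (n := n)))
    rw [_root_.sub_sub_cancel, div_div, ← pow_succ] at hstep
    calc c ^ (n + 1) * f (1 - (1 - t) / K ^ (n + 1))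
        = c ^ n * (c * f (1 - (1 - t) / K ^ (n + 1))) := by ring
      _ ≤ c ^ n * f (1 - (1 - t) / K ^ n) := by gcongr
      _ ≤ f t := pow_mul_le_of_revDoubling hK hc hrd ht n

variable (hanti : AntitoneOn f (Ico 0 1)) (hpos : ∀ r ∈ Ico (0:ℝ) 1, 0 < f r)
include hanti hpos

theorem mul_rpow_logb_le_div_of_doubling {K D : ℝ} (hK : 1 < K) (hD : 1 ≤ D)
    (hd : ∀ r ∈ Ico (0:ℝ) 1, f r ≤ D * f (1 - (1 - r) / K)) {t s : ℝ} (ht : 0 ≤ t)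
    (hts : t ≤ s) (hs : s < 1) :
    D⁻¹ * ((1 - s) / (1 - t)) ^ Real.logb K D ≤ f s / f t := by
  have ht' : t ∈ Ico (0:ℝ) 1 := ⟨ht, hts.trans_lt hs⟩
  have h1s : 0 < 1 - s := sub_pos.2 hs
  have hK0 : 0 < K := zero_lt_one.trans hK
  have hy : 0 < (1 - t) / (1 - s) := div_pos (by linarith) h1s
  obtain ⟨n, hn, hn1⟩ :=
    exists_nat_pow_near ((one_le_div h1s).2 (by linarith) : 1 ≤ (1 - t) / (1 - s)) hK
  have hfs : D⁻¹ ^ (n + 1) * f t ≤ f s := by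
    have hKn : 1 ≤ K ^ (n + 1) := one_le_pow₀ hK.le
    have hsle : s ≤ 1 - (1 - t) / K ^ (n + 1) := by
      rw [div_lt_iff₀ h1s] at hn1
      rw [le_sub_comm, div_le_iff₀ (by positivity)]
      linarith
    calc D⁻¹ ^ (n + 1) * f t ≤ f (1 - (1 - t) / K ^ (n + 1)) := by
          rw [inv_pow, inv_mul_le_iff₀ (by positivity)]
          exact le_pow_mul_of_doubling hK.le (by positivity) hd ht' (n + 1)
      _ ≤ f s := hanti ⟨ht.trans hts, hs⟩ (one_sub_div_mem_Ico ht' hKn) hsle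
  have hpow : ((1 - s) / (1 - t)) ^ Real.logb K D ≤ D⁻¹ ^ n := by
    rw [← inv_div, Real.inv_rpow hy.le, inv_pow, ← pow_rpow_logb hK (by positivity)]
    exact inv_anti₀ (by positivity)
      (Real.rpow_le_rpow (by positivity) hn (Real.logb_nonneg hK hD))
  rw [le_div_iff₀ (hpos t ht')]
  calc D⁻¹ * ((1 - s) / (1 - t)) ^ Real.logb K D * f t ≤ D⁻¹ * D⁻¹ ^ n * f t := by
        gcongr
        exact (hpos t ht').le
    _ = D⁻¹ ^ (n + 1) * f t := by ring
    _ ≤ f s := hfs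

theorem div_le_mul_rpow_logb_of_revDoubling {K c : ℝ} (hK : 1 < K) (hc : 1 < c)
    (hrd : ∀ r ∈ Ico (0:ℝ) 1, c * f (1 - (1 - r) / K) ≤ f r) {t s : ℝ} (ht : 0 ≤ t)
    (hts : t ≤ s) (hs : s < 1) :
    f s / f t ≤ c * ((1 - s) / (1 - t)) ^ Real.logb K c := by
  have ht' : t ∈ Ico (0:ℝ) 1 := ⟨ht, hts.trans_lt hs⟩
  have h1s : 0 < 1 - s := sub_pos.2 hs
  have hK0 : 0 < K := zero_lt_one.trans hK
  have hc0 : 0 < c := zero_lt_one.trans hc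
  have hy : 0 < (1 - t) / (1 - s) := div_pos (by linarith) h1s
  obtain ⟨m, hm, hm1⟩ :=
    exists_nat_pow_near ((one_le_div h1s).2 (by linarith) : 1 ≤ (1 - t) / (1 - s)) hK
  have hfs : c ^ m * f s ≤ f t := by
    have hKm : 1 ≤ K ^ m := one_le_pow₀ hK.le
    have hsge : 1 - (1 - t) / K ^ m ≤ s := by
      rw [le_div_iff₀ h1s] at hm
      rw [sub_le_comm, le_div_iff₀ (by positivity)]
      linarith
    calc c ^ m * f s ≤ c ^ m * f (1 - (1 - t) / K ^ m) := by
          gcongr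
          exact hanti (one_sub_div_mem_Ico ht' hKm) ⟨ht.trans hts, hs⟩ hsge
      _ ≤ f t := pow_mul_le_of_revDoubling hK.le hc0.le hrd ht' m
  have hpow : (c ^ (m + 1))⁻¹ ≤ ((1 - s) / (1 - t)) ^ Real.logb K c := by
    rw [← inv_div, Real.inv_rpow hy.le, ← pow_rpow_logb hK hc0]
    exact inv_anti₀ (by positivity) (Real.rpow_le_rpow hy.le hm1.le (Real.logb_nonneg hK hc.le))
  rw [div_le_iff₀ (hpos t ht')]
  calc f s = (c ^ m)⁻¹ * (c ^ m * f s) := by field_simp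
    _ ≤ (c ^ m)⁻¹ * f t := by gcongr
    _ = c * (c ^ (m + 1))⁻¹ * f t := by rw [pow_succ]; field_simp
    _ ≤ c * ((1 - s) / (1 - t)) ^ Real.logb K c * f t := by
        gcongr
        exact (hpos t ht').le

theorem exists_hasPowerBounds {D K c : ℝ}
    (hd : ∀ r ∈ Ico (0:ℝ) 1, f r ≤ D * f ((1 + r) / 2)) (hK : 1 < K) (hc : 1 < c)
    (hrd : ∀ r ∈ Ico (0:ℝ) 1, c * f (1 - (1 - r) / K) ≤ f r) :
    ∃ a b C : ℝ, 0 < a ∧ 1 ≤ C ∧ HasPowerBounds f a b C := by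
  set D' := max D 1
  have hd' : ∀ r ∈ Ico (0:ℝ) 1, f r ≤ D' * f (1 - (1 - r) / 2) := fun r hr => by
    have hmid := one_sub_div_mem_Ico hr one_le_two
    rw [show 1 - (1 - r) / 2 = (1 + r) / 2 by ring] at hmid ⊢
    exact (hd r hr).trans (mul_le_mul_of_nonneg_right (le_max_left _ _) (hpos _ hmid).le)
  refine ⟨Real.logb K c, Real.logb 2 D', max D' c, Real.logb_pos hK hc,
    hc.le.trans (le_max_right _ _), fun t s ht hts hs => ?_⟩
  have hx : 0 ≤ (1 - s) / (1 - t) := div_nonneg (by linarith) (by linarith)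
  constructor
  · calc (max D' c)⁻¹ * ((1 - s) / (1 - t)) ^ Real.logb 2 D'
        ≤ D'⁻¹ * ((1 - s) / (1 - t)) ^ Real.logb 2 D' := by
          refine mul_le_mul_of_nonneg_right ?_ (Real.rpow_nonneg hx _)
          exact inv_anti₀ (zero_lt_one.trans_le (le_max_right _ _)) (le_max_left _ _)
      _ ≤ f s / f t :=
          mul_rpow_logb_le_div_of_doubling hanti hpos one_lt_two (le_max_right _ _) hd' ht hts hs
  · calc f s / f t ≤ c * ((1 - s) / (1 - t)) ^ Real.logb K c :=
          div_le_mul_rpow_logb_of_revDoubling hanti hpos hK hc hrd ht hts hs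
      _ ≤ max D' c * ((1 - s) / (1 - t)) ^ Real.logb K c :=
          mul_le_mul_of_nonneg_right (le_max_right _ _) (Real.rpow_nonneg hx _)

end PowerBounds

/-- For `ω ∈ D` there are `0 < a < b` and `C ≥ 1` with
`C⁻¹((1-s)/(1-t))^b ≤ ω̂(s)/ω̂(t) ≤ C((1-s)/(1-t))^a` for `0 ≤ t ≤ s < 1`; in particular
`ω̂(t)/(1-t)^b → ∞` and `ω̂(t)/(1-t)^a → 0` as `t → 1⁻`. -/
theorem statement10 (ω : ℝ → ℝ) (hω : IsRadialWeight ω) (hD : IsDD ω) :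
    ∃ a b C : ℝ, 0 < a ∧ a < b ∧ 1 ≤ C ∧
      (∀ t s : ℝ, 0 ≤ t → t ≤ s → s < 1 →
        C⁻¹ * ((1 - s) / (1 - t)) ^ b ≤ wHat ω s / wHat ω t ∧
        wHat ω s / wHat ω t ≤ C * ((1 - s) / (1 - t)) ^ a) ∧
      Tendsto (fun t : ℝ => wHat ω t / (1 - t) ^ b) (nhdsWithin 1 (Iio 1)) atTop ∧
      Tendsto (fun t : ℝ => wHat ω t / (1 - t) ^ a) (nhdsWithin 1 (Iio 1)) (nhds 0) := by
  obtain ⟨⟨D, -, hd⟩, K, hK, c, hc, hrd⟩ := hD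
  have hpos : ∀ r ∈ Ico (0:ℝ) 1, 0 < wHat ω r := fun _ => hω.wHat_pos
  obtain ⟨a, b, C, ha, hC, hbounds⟩ :=
    exists_hasPowerBounds hω.antitoneOn_wHat hpos hd hK hc hrd
  have hC0 : 0 < C := zero_lt_one.trans_le hC
  refine ⟨a / 2, max a b + 1, C, half_pos ha, by linarith [le_max_left a b], hC,
    hbounds.mono hC0.le (half_le_self ha.le) (by linarith [le_max_right a b]),
    hbounds.tendsto_div_rpow_atTop hC0 (hpos 0 ⟨le_rfl, zero_lt_one⟩)
      (by linarith [le_max_right a b]),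
    hbounds.tendsto_div_rpow_zero hpos (half_lt_self ha)⟩

end
end

section
/- Let ω ∈ D = D̂ ∩ Ď be a radial weight. Then there exists ε₀ > 0 such that for every ε ∈ (0,ε₀) there is a constant C > 0 with ∫_0^{(1+s)/2} dt/((1−t)^{2+ε} ω̂(t)) ≤ C / ((1−s)^{1+ε} ω̂(s)) for all s ∈ [0,1). -/
open MeasureTheory Filter Set Complex ENNReal

noncomputable section

/-! Since `ω̂` is decreasing, doubling gives `ω̂(t) ≥ ω̂((1+s)/2) ≥ ω̂(s)/C` for all
`t ≤ (1+s)/2`. Pulling `ω̂(t)` out of the integral leaves `∫_0^{(1+s)/2} (1-t)^{-(2+ε)} dt`,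
which is at most `2^{1+ε} (1-s)^{-(1+ε)} / (1+ε)`; this works for every `ε > -1`. -/

section RadialWeight

variable {ω : ℝ → ℝ}

lemma IsRadialWeight.wHat_pos_s11 (hω : IsRadialWeight ω) {s : ℝ} (hs : s ∈ Ico (0:ℝ) 1) :
    0 < wHat ω s := by
  have hsub : uIcc s 1 ⊆ uIcc 0 1 := by
    rw [uIcc_of_le hs.2.le, uIcc_of_le zero_le_one]
    exact Icc_subset_Icc hs.1 le_rfl
  exact intervalIntegral.intervalIntegral_pos_of_pos_on (hω.2.mono_set hsub)
    (fun x hx => hω.1 x ⟨hs.1.trans hx.1.le, hx.2⟩) hs.2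

lemma IsRadialWeight.wHat_antitoneOn (hω : IsRadialWeight ω) :
    AntitoneOn (wHat ω) (Ico (0:ℝ) 1) := by
  intro a ha b hb hab
  have hsub : ∀ {c d : ℝ}, 0 ≤ c → c ≤ d → d ≤ 1 → uIcc c d ⊆ uIcc 0 1 := fun hc hcd hd => by
    rw [uIcc_of_le hcd, uIcc_of_le zero_le_one]
    exact Icc_subset_Icc hc hd
  have hsplit : (∫ t in a..b, ω t) + wHat ω b = wHat ω a :=
    intervalIntegral.integral_add_adjacent_intervals (hω.2.mono_set (hsub ha.1 hab hb.2.le))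
      (hω.2.mono_set (hsub hb.1 hb.2.le le_rfl))
  have hnonneg : 0 ≤ ∫ t in a..b, ω t := intervalIntegral.integral_nonneg hab fun u hu =>
    (hω.1 u ⟨ha.1.trans hu.1, hu.2.trans_lt hb.2⟩).le
  linarith

lemma IsRadialWeight.wHat_le_mul_wHat_of_le_midpoint (hω : IsRadialWeight ω) {C : ℝ} (hC : 0 ≤ C)
    (hdoub : ∀ r ∈ Ico (0:ℝ) 1, wHat ω r ≤ C * wHat ω ((1 + r) / 2)) {s t : ℝ}
    (hs : s ∈ Ico (0:ℝ) 1) (ht : t ∈ Icc 0 ((1 + s) / 2)) : wHat ω s ≤ C * wHat ω t := by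
  have hmid : (1 + s) / 2 ∈ Ico (0:ℝ) 1 := ⟨by linarith [hs.1], by linarith [hs.2]⟩
  calc wHat ω s ≤ C * wHat ω ((1 + s) / 2) := hdoub s hs
    _ ≤ C * wHat ω t := by
      gcongr
      exact hω.wHat_antitoneOn ⟨ht.1, ht.2.trans_lt hmid.2⟩ hmid ht.2

end RadialWeight

lemma integral_one_sub_rpow_neg_le {p m : ℝ} (hp : 1 < p) (hm : m < 1) :
    ∫ t in (0:ℝ)..m, (1 - t) ^ (-p) ≤ (1 - m) ^ (1 - p) / (p - 1) := by
  have hzero : (0:ℝ) ∉ uIcc (1 - m) 1 := by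
    rw [mem_uIcc]
    rintro (h | h) <;> linarith [h.1, h.2]
  have hval : ∫ t in (0:ℝ)..m, (1 - t) ^ (-p) = ((1 - m) ^ (1 - p) - 1) / (p - 1) := by
    rw [intervalIntegral.integral_comp_sub_left (fun x => x ^ (-p)), sub_zero,
      integral_rpow (Or.inr ⟨by linarith, hzero⟩), Real.one_rpow, show -p + 1 = 1 - p by ring,
      ← neg_div_neg_eq, neg_sub, neg_sub]
  rw [hval]
  gcongr
  linarith

theorem IsDoubling.integral_one_div_rpow_mul_wHat_le {ω : ℝ → ℝ} (hD : IsDoubling ω)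
    (hω : IsRadialWeight ω) {ε : ℝ} (hε : -1 < ε) :
    ∃ C : ℝ, 0 < C ∧ ∀ s ∈ Ico (0:ℝ) 1,
      (∫ t in (0:ℝ)..((1 + s) / 2), 1 / ((1 - t) ^ (2 + ε) * wHat ω t)) ≤
        C / ((1 - s) ^ (1 + ε) * wHat ω s) := by
  obtain ⟨C, hC, hdoub⟩ := hD
  have hε' : 0 < 1 + ε := by linarith
  refine ⟨C * 2 ^ (1 + ε) / (1 + ε), by positivity, fun s hs => ?_⟩
  set m := (1 + s) / 2 with hm
  have hm0 : 0 ≤ m := by rw [hm]; linarith [hs.1]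
  have hm1 : m < 1 := by rw [hm]; linarith [hs.2]
  have h1s : 0 < 1 - s := by linarith [hs.2]
  have hws : 0 < wHat ω s := hω.wHat_pos_s11 hs
  have hpoint : ∀ t ∈ Icc (0:ℝ) m,
      1 / ((1 - t) ^ (2 + ε) * wHat ω t) ≤ C / wHat ω s * (1 - t) ^ (-(2 + ε)) := by
    intro t ht
    have hwt := hω.wHat_le_mul_wHat_of_le_midpoint hC.le hdoub hs ht
    have h1t : 0 < 1 - t := by linarith [ht.2]
    rw [Real.rpow_neg h1t.le, one_div, mul_inv, mul_comm]
    gcongr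
    rw [inv_le_comm₀ (by nlinarith) (by positivity), inv_div, div_le_iff₀ hC]
    linarith
  have hmajorant :
      IntervalIntegrable (fun t => C / wHat ω s * (1 - t) ^ (-(2 + ε))) volume 0 m := by
    refine ContinuousOn.intervalIntegrable fun t ht => ?_
    rw [uIcc_of_le hm0] at ht
    have h1t : (1:ℝ) - t ≠ 0 := (show (0:ℝ) < 1 - t by linarith [ht.2]).ne'
    exact (continuousAt_const.mul
      ((continuousAt_const.sub continuousAt_id).rpow_const (Or.inl h1t))).continuousWithinAt
  calc (∫ t in (0:ℝ)..m, 1 / ((1 - t) ^ (2 + ε) * wHat ω t))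
      ≤ ∫ t in (0:ℝ)..m, C / wHat ω s * (1 - t) ^ (-(2 + ε)) := by
        rw [intervalIntegral.integral_of_le hm0, intervalIntegral.integral_of_le hm0]
        refine integral_mono_of_nonneg ?_ hmajorant.1 ?_ <;>
          refine ae_restrict_of_forall_mem measurableSet_Ioc fun t ht => ?_
        · have h1t : 0 < 1 - t := by linarith [ht.2]
          have hwt : 0 < wHat ω t := hω.wHat_pos_s11 ⟨ht.1.le, by linarith [ht.2]⟩
          positivity
        · exact hpoint t (Ioc_subset_Icc_self ht)
    _ ≤ C / wHat ω s * ((1 - m) ^ (1 - (2 + ε)) / (2 + ε - 1)) := by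
        rw [intervalIntegral.integral_const_mul]
        gcongr
        exact integral_one_sub_rpow_neg_le (by linarith) hm1
    _ = C * 2 ^ (1 + ε) / (1 + ε) / ((1 - s) ^ (1 + ε) * wHat ω s) := by
        rw [show 1 - m = (1 - s) / 2 by ring, show 1 - (2 + ε) = -(1 + ε) by ring,
          Real.rpow_neg (by positivity), Real.div_rpow h1s.le zero_le_two,
          show 2 + ε - 1 = 1 + ε by ring]
        field_simp

/-- For `ω ∈ D` there is `ε₀ > 0` such that for every `ε ∈ (0,ε₀)` one has
`∫_0^{(1+s)/2} dt/((1-t)^{2+ε} ω̂(t)) ≲ 1/((1-s)^{1+ε} ω̂(s))` uniformly in `s ∈ [0,1)`. -/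
theorem statement11 (ω : ℝ → ℝ) (hω : IsRadialWeight ω) (hD : IsDD ω) :
    ∃ ε₀ : ℝ, 0 < ε₀ ∧ ∀ ε ∈ Ioo (0:ℝ) ε₀, ∃ C : ℝ, 0 < C ∧ ∀ s ∈ Ico (0:ℝ) 1,
      (∫ t in (0:ℝ)..((1 + s) / 2), 1 / ((1 - t) ^ (2 + ε) * wHat ω t)) ≤
        C / ((1 - s) ^ (1 + ε) * wHat ω s) :=
  ⟨1, one_pos, fun _ hε => hD.1.integral_one_div_rpow_mul_wHat_le hω (by linarith [hε.1])⟩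

end
end

section
/- Let ω ∈ D = D̂ ∩ Ď be a radial weight. Then there exist r > 0 and C ≥ 1 such that for all z ∈ 𝔻 and all w ∈ D(z,r): C⁻¹ B_z^ω(z) ≤ |B_z^ω(w)| ≤ C B_z^ω(z). -/
open MeasureTheory Filter Set Complex ENNReal

noncomputable section

/-!
Write `B_z^ω(w) = Σ c_k (w z̄)^k` with `c_k = 1 / (2 ω_{2k+1})`. Doubling of `ω̂` gives
`ω_n ≲ ω̂(1 - 1/n) ≲ ω_{2n}`, hence `c_k ≲ c_{⌊k/2⌋}`. Splitting a power series with such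
coefficients into its even and odd parts gives `Σ c_k s^k ≲ Σ c_k s^{2k}`, and together with
`k s^k ≤ (1 - s)⁻¹` this yields `Σ k c_k |z|^k ≲ B_z^ω(z) / (1 - |z|)`. As
`|B_z^ω(w) - B_z^ω(z)| ≤ |w - z| Σ k c_k |z|^k` and `|w - z| ≲ r (1 - |z|)` on `D(z, r)`,
for small `r` the kernel `B_z^ω(w)` stays within `B_z^ω(z) / 2` of `B_z^ω(z)`.
-/

open intervalIntegral

lemma intervalIntegral_nonneg_of_forall_Ioo {f : ℝ → ℝ} {a b : ℝ} (hab : a ≤ b)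
    (hf : ∀ x ∈ Ioo a b, 0 ≤ f x) : 0 ≤ ∫ x in a..b, f x := by
  rw [integral_of_le hab, integral_Ioc_eq_integral_Ioo]
  exact setIntegral_nonneg measurableSet_Ioo hf

variable {ω : ℝ → ℝ}

namespace IsRadialWeight

variable (hω : IsRadialWeight ω)
include hω

lemma pos_of_mem_Ioo {a b x : ℝ} (ha : 0 ≤ a) (hb : b ≤ 1) (hx : x ∈ Ioo a b) : 0 < ω x :=
  hω.1 x ⟨ha.trans hx.1.le, hx.2.trans_le hb⟩

lemma intervalIntegrable_s16 {a b : ℝ} (ha : a ∈ Icc (0 : ℝ) 1) (hb : b ∈ Icc (0 : ℝ) 1) :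
    IntervalIntegrable ω volume a b := by
  refine hω.2.mono_set (uIcc_subset_uIcc ?_ ?_) <;> rwa [uIcc_of_le zero_le_one]

lemma intervalIntegrable_pow_mul (n : ℕ) {a b : ℝ} (ha : a ∈ Icc (0 : ℝ) 1)
    (hb : b ∈ Icc (0 : ℝ) 1) : IntervalIntegrable (fun r => r ^ n * ω r) volume a b :=
  (hω.intervalIntegrable_s16 ha hb).continuousOn_mul (continuous_pow n).continuousOn

lemma wHat_antitoneOn_s16 : AntitoneOn (wHat ω) (Icc 0 1) := by
  intro a ha b hb hab
  have hsplit : (∫ s in a..b, ω s) + wHat ω b = wHat ω a :=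
    integral_add_adjacent_intervals (hω.intervalIntegrable_s16 ha hb)
      (hω.intervalIntegrable_s16 hb ⟨zero_le_one, le_rfl⟩)
  have := intervalIntegral_nonneg_of_forall_Ioo hab fun x hx =>
    (hω.pos_of_mem_Ioo ha.1 hb.2 hx).le
  linarith

lemma wHat_pos_s16 {a : ℝ} (ha : 0 ≤ a) (ha1 : a < 1) : 0 < wHat ω a :=
  intervalIntegral_pos_of_pos_on (hω.intervalIntegrable_s16 ⟨ha, ha1.le⟩ ⟨zero_le_one, le_rfl⟩)
    (fun _ hx => hω.pos_of_mem_Ioo ha le_rfl hx) ha1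

lemma wHat_nonneg {a : ℝ} (ha : a ∈ Icc (0 : ℝ) 1) : 0 ≤ wHat ω a := by
  simpa [wHat] using hω.wHat_antitoneOn_s16 ha ⟨zero_le_one, le_rfl⟩ ha.2

lemma wMom_pos (n : ℕ) : 0 < wMom ω n :=
  intervalIntegral_pos_of_pos_on
    (hω.intervalIntegrable_pow_mul n ⟨le_rfl, zero_le_one⟩ ⟨zero_le_one, le_rfl⟩)
    (fun _ hx => mul_pos (pow_pos hx.1 n) (hω.pos_of_mem_Ioo le_rfl le_rfl hx)) one_pos

lemma wMom_antitone : Antitone (wMom ω) := fun m n hmn =>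
  integral_mono_on_of_le_Ioo zero_le_one
    (hω.intervalIntegrable_pow_mul n ⟨le_rfl, zero_le_one⟩ ⟨zero_le_one, le_rfl⟩)
    (hω.intervalIntegrable_pow_mul m ⟨le_rfl, zero_le_one⟩ ⟨zero_le_one, le_rfl⟩)
    fun _ hx => mul_le_mul_of_nonneg_right (pow_le_pow_of_le_one hx.1.le hx.2.le hmn)
      (hω.pos_of_mem_Ioo le_rfl le_rfl hx).le

lemma wMom_eq_add {ρ : ℝ} (hρ : ρ ∈ Icc (0 : ℝ) 1) (n : ℕ) :
    wMom ω n = (∫ r in (0 : ℝ)..ρ, r ^ n * ω r) + ∫ r in ρ..1, r ^ n * ω r :=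
  (integral_add_adjacent_intervals (hω.intervalIntegrable_pow_mul n ⟨le_rfl, zero_le_one⟩ hρ)
    (hω.intervalIntegrable_pow_mul n hρ ⟨zero_le_one, le_rfl⟩)).symm

lemma integral_pow_mul_nonneg (n : ℕ) {a b : ℝ} (ha : 0 ≤ a) (hab : a ≤ b) (hb : b ≤ 1) :
    0 ≤ ∫ r in a..b, r ^ n * ω r :=
  intervalIntegral_nonneg_of_forall_Ioo hab fun _ hx =>
    mul_nonneg (pow_nonneg (ha.trans hx.1.le) n) (hω.pos_of_mem_Ioo ha hb hx).le

lemma pow_mul_wHat_le_wMom {ρ : ℝ} (hρ : ρ ∈ Icc (0 : ℝ) 1) (n : ℕ) :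
    ρ ^ n * wHat ω ρ ≤ wMom ω n := by
  have htail : ρ ^ n * wHat ω ρ ≤ ∫ r in ρ..1, r ^ n * ω r := by
    rw [wHat, ← intervalIntegral.integral_const_mul]
    exact integral_mono_on_of_le_Ioo hρ.2
      ((hω.intervalIntegrable_s16 hρ ⟨zero_le_one, le_rfl⟩).const_mul _)
      (hω.intervalIntegrable_pow_mul n hρ ⟨zero_le_one, le_rfl⟩) fun _ hx =>
        mul_le_mul_of_nonneg_right (pow_le_pow_left₀ hρ.1 hx.1.le n)
          (hω.pos_of_mem_Ioo hρ.1 le_rfl hx).le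
  rw [hω.wMom_eq_add hρ n]
  linarith [hω.integral_pow_mul_nonneg n le_rfl hρ.1 hρ.2]

lemma wMom_le_pow_mul_wMom_add_wHat {m n : ℕ} (hmn : m ≤ n) {ρ : ℝ} (hρ : ρ ∈ Icc (0 : ℝ) 1) :
    wMom ω n ≤ ρ ^ (n - m) * wMom ω m + wHat ω ρ := by
  have hhead : ∫ r in (0 : ℝ)..ρ, r ^ n * ω r ≤ ρ ^ (n - m) * wMom ω m :=
    calc ∫ r in (0 : ℝ)..ρ, r ^ n * ω r
        ≤ ∫ r in (0 : ℝ)..ρ, ρ ^ (n - m) * (r ^ m * ω r) :=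
          integral_mono_on_of_le_Ioo hρ.1
            (hω.intervalIntegrable_pow_mul n ⟨le_rfl, zero_le_one⟩ hρ)
            ((hω.intervalIntegrable_pow_mul m ⟨le_rfl, zero_le_one⟩ hρ).const_mul _)
            fun x hx => by
              rw [← mul_assoc, ← pow_sub_mul_pow x hmn]
              gcongr
              · exact (hω.pos_of_mem_Ioo le_rfl hρ.2 hx).le
              · exact pow_nonneg hx.1.le m
              · exact hx.1.le
              · exact hx.2.le
      _ = ρ ^ (n - m) * ∫ r in (0 : ℝ)..ρ, r ^ m * ω r := intervalIntegral.integral_const_mul _ _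
      _ ≤ ρ ^ (n - m) * wMom ω m := by
          gcongr
          · exact pow_nonneg hρ.1 _
          · rw [hω.wMom_eq_add hρ m]
            linarith [hω.integral_pow_mul_nonneg m hρ.1 hρ.2 le_rfl]
  have htail : ∫ r in ρ..1, r ^ n * ω r ≤ wHat ω ρ :=
    integral_mono_on_of_le_Ioo hρ.2 (hω.intervalIntegrable_pow_mul n hρ ⟨zero_le_one, le_rfl⟩)
      (hω.intervalIntegrable_s16 hρ ⟨zero_le_one, le_rfl⟩) fun _ hx =>
        mul_le_of_le_one_left (hω.pos_of_mem_Ioo hρ.1 le_rfl hx).le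
          (pow_le_one₀ (hρ.1.trans hx.1.le) hx.2.le)
  rw [hω.wMom_eq_add hρ n]
  linarith

lemma exists_one_le_doubling_const (hd : IsDoubling ω) :
    ∃ C, 1 ≤ C ∧ ∀ r ∈ Ico (0 : ℝ) 1, wHat ω r ≤ C * wHat ω ((1 + r) / 2) := by
  obtain ⟨C, -, hC⟩ := hd
  refine ⟨C, ?_, hC⟩
  have h0 := hC 0 ⟨le_rfl, one_pos⟩
  have hanti := hω.wHat_antitoneOn_s16 ⟨le_rfl, zero_le_one⟩ ⟨by norm_num, by norm_num⟩
    (by norm_num : (0 : ℝ) ≤ (1 + 0) / 2)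
  have hpos := hω.wHat_pos_s16 (a := (1 + 0) / 2) (by norm_num) (by norm_num)
  nlinarith

end IsRadialWeight

lemma sq_mul_one_sub_div_pow_le_half {C : ℝ} {n s : ℕ} (hs : 4 * C ^ 2 ≤ s) (hns : s ≤ n) :
    C ^ 2 * (1 - s / n : ℝ) ^ (n - n / 2) ≤ 1 / 2 := by
  rcases Nat.eq_zero_or_pos n with rfl | hn
  · obtain rfl : s = 0 := by omega
    norm_num at hs ⊢
    nlinarith
  have hs' : (s : ℝ) ≤ n := by exact_mod_cast hns
  replace hn : (0 : ℝ) < n := by exact_mod_cast hn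
  have hn2 : (n : ℝ) ≤ 2 * (n - n / 2 : ℕ) := by
    exact_mod_cast (by omega : n ≤ 2 * (n - n / 2))
  have hρ : 0 ≤ (1 - s / n : ℝ) := by rw [sub_nonneg, div_le_one hn]; exact hs'
  have hexp : (1 - s / n : ℝ) ^ (n - n / 2) ≤ Real.exp (-(s / 2)) :=
    calc (1 - s / n : ℝ) ^ (n - n / 2) ≤ Real.exp (-(s / n)) ^ (n - n / 2) :=
          pow_le_pow_left₀ hρ (Real.one_sub_le_exp_neg _) _
      _ = Real.exp (-(s / n * (n - n / 2 : ℕ))) := by rw [← Real.exp_nat_mul]; ring_nf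
      _ ≤ Real.exp (-(s / 2)) := by
          gcongr
          rw [div_mul_eq_mul_div, le_div_iff₀ hn]
          nlinarith
  have : C ^ 2 * Real.exp (-(s / 2)) ≤ 1 / 2 := by
    rw [Real.exp_neg, ← div_eq_mul_inv, div_le_iff₀ (Real.exp_pos _)]
    nlinarith [Real.add_one_le_exp (s / 2 : ℝ)]
  exact (mul_le_mul_of_nonneg_left hexp (by positivity)).trans this

section Doubling

variable (hω : IsRadialWeight ω) {C : ℝ} (hC1 : 1 ≤ C)
  (hC : ∀ r ∈ Ico (0 : ℝ) 1, wHat ω r ≤ C * wHat ω ((1 + r) / 2))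
include hω hC1 hC

lemma wHat_one_sub_le_pow_mul (L : ℕ) {d d' : ℝ} (hd : 0 < d) (hd1 : d ≤ 1) (hd'1 : d' ≤ 1)
    (hdd' : d ≤ 2 ^ L * d') : wHat ω (1 - d) ≤ C ^ L * wHat ω (1 - d') := by
  induction L generalizing d with
  | zero =>
    rw [pow_zero, one_mul] at hdd' ⊢
    exact hω.wHat_antitoneOn_s16 ⟨by linarith, by linarith⟩ ⟨by linarith, by linarith⟩ (by linarith)
  | succ L ih =>
    have hstep : wHat ω (1 - d) ≤ C * wHat ω (1 - d / 2) := by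
      simpa [show (1 + (1 - d)) / 2 = 1 - d / 2 by ring] using hC (1 - d) ⟨by linarith, by linarith⟩
    calc wHat ω (1 - d) ≤ C * wHat ω (1 - d / 2) := hstep
      _ ≤ C * (C ^ L * wHat ω (1 - d')) :=
          mul_le_mul_of_nonneg_left
            (ih (by positivity) (by linarith) (by rw [pow_succ] at hdd'; linarith)) (by linarith)
      _ = C ^ (L + 1) * wHat ω (1 - d') := by ring

lemma wMom_le_pow_mul_wHat_of_lt {n s : ℕ} (hn : 1 ≤ n) (hns : n < s) :
    wMom ω n ≤ C ^ s * wHat ω (1 - 1 / n) := by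
  have hn' : (1 : ℝ) ≤ n := by exact_mod_cast hn
  have hn2 : (n : ℝ) ≤ 2 ^ s := by exact_mod_cast (hns.trans s.lt_two_pow_self).le
  calc wMom ω n ≤ wMom ω 0 := hω.wMom_antitone n.zero_le
    _ = wHat ω (1 - 1) := by simp [wMom, wHat]
    _ ≤ C ^ s * wHat ω (1 - 1 / n) :=
        wHat_one_sub_le_pow_mul hω hC1 hC s one_pos le_rfl
          (by rw [div_le_one (by positivity)]; exact hn')
          (by rw [mul_one_div, le_div_iff₀ (by positivity)]; linarith)

/-- Split `ω_n` at `ρ = 1 - s/n`: below `ρ` the factor `r^(n - n/2) ≤ e^(-s/2)` damps `ω_{n/2}`,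
above `ρ` doubling bounds `ω̂(ρ)` by `C^s ω̂(1 - 1/n)`. -/
lemma wMom_le_of_wMom_div_two_le {n s : ℕ} (hs : 4 * C ^ 2 ≤ s) (hns : s ≤ n) {K : ℝ}
    (hK : 0 ≤ K) (hhalf : wMom ω (n / 2) ≤ K * wHat ω (1 - 1 / (n / 2 : ℕ))) :
    wMom ω n ≤ (K / 2 + C ^ s) * wHat ω (1 - 1 / n) := by
  have hs' : (s : ℝ) ≤ n := by exact_mod_cast hns
  have hs4 : (4 : ℝ) ≤ s := by nlinarith
  have hn4 : 4 ≤ n := by exact_mod_cast hs4.trans hs'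
  have hn' : (1 : ℝ) ≤ n := by linarith
  have hm' : (1 : ℝ) ≤ (n / 2 : ℕ) := by exact_mod_cast (by omega : 1 ≤ n / 2)
  have hn4m : (n : ℝ) ≤ 4 * (n / 2 : ℕ) := by exact_mod_cast (by omega : n ≤ 4 * (n / 2))
  have hinv : 1 / (n : ℝ) ≤ 1 := by rw [div_le_one (by positivity)]; exact hn'
  have hwn : 0 ≤ wHat ω (1 - 1 / n) := hω.wHat_nonneg ⟨by linarith, by simp⟩
  have hρ : (1 - s / n : ℝ) ∈ Icc (0 : ℝ) 1 :=
    ⟨by rw [sub_nonneg, div_le_one (by positivity)]; exact hs', by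
      have : (0 : ℝ) ≤ s / n := by positivity
      linarith⟩
  have hdecay := sq_mul_one_sub_div_pow_le_half hs hns
  have hhead : wMom ω (n / 2) ≤ K * (C ^ 2 * wHat ω (1 - 1 / n)) := by
    refine hhalf.trans (mul_le_mul_of_nonneg_left ?_ hK)
    refine wHat_one_sub_le_pow_mul hω hC1 hC 2 (by positivity)
      (by rw [div_le_one (by positivity)]; exact hm') hinv ?_
    rw [div_le_iff₀ (by positivity)]
    field_simp
    linarith
  have htail : wHat ω (1 - s / n) ≤ C ^ s * wHat ω (1 - 1 / n) := by
    refine wHat_one_sub_le_pow_mul hω hC1 hC s (by positivity)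
      (by rw [div_le_one (by positivity)]; exact hs') hinv ?_
    rw [mul_one_div]
    gcongr
    exact_mod_cast s.lt_two_pow_self.le
  calc wMom ω n ≤ (1 - s / n) ^ (n - n / 2) * wMom ω (n / 2) + wHat ω (1 - s / n) :=
        hω.wMom_le_pow_mul_wMom_add_wHat (Nat.div_le_self n 2) hρ
    _ ≤ (1 - s / n) ^ (n - n / 2) * (K * (C ^ 2 * wHat ω (1 - 1 / n)))
          + C ^ s * wHat ω (1 - 1 / n) := by
        gcongr
        exact pow_nonneg hρ.1 _
    _ = (C ^ 2 * (1 - s / n) ^ (n - n / 2)) * (K * wHat ω (1 - 1 / n))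
          + C ^ s * wHat ω (1 - 1 / n) := by ring
    _ ≤ 1 / 2 * (K * wHat ω (1 - 1 / n)) + C ^ s * wHat ω (1 - 1 / n) := by
        gcongr
    _ = (K / 2 + C ^ s) * wHat ω (1 - 1 / n) := by ring

lemma exists_wMom_le_mul_wHat :
    ∃ K, 0 ≤ K ∧ ∀ n : ℕ, 1 ≤ n → wMom ω n ≤ K * wHat ω (1 - 1 / n) := by
  obtain ⟨s, hs⟩ := exists_nat_ge (4 * C ^ 2)
  have hCs : 0 ≤ C ^ s := pow_nonneg (zero_le_one.trans hC1) s
  refine ⟨2 * C ^ s, by positivity, fun n hn => ?_⟩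
  induction n using Nat.strong_induction_on with
  | _ n ih =>
  have hwn : 0 ≤ wHat ω (1 - 1 / n) := hω.wHat_nonneg
    ⟨by rw [sub_nonneg, div_le_one (by positivity)]; exact_mod_cast hn, by simp⟩
  rcases lt_or_ge n s with hns | hns
  · exact (wMom_le_pow_mul_wHat_of_lt hω hC1 hC hn hns).trans (by nlinarith)
  · have hn2 : 2 ≤ n := by
      have : (2 : ℝ) ≤ n := by nlinarith [(by exact_mod_cast hns : (s : ℝ) ≤ n)]
      exact_mod_cast this
    refine (wMom_le_of_wMom_div_two_le hω hC1 hC hs hns (by positivity)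
      (ih _ (by omega) (by omega))).trans_eq ?_
    ring

lemma exists_wMom_le_mul_wMom_two_mul : ∃ D, 1 ≤ D ∧ ∀ n, wMom ω n ≤ D * wMom ω (2 * n) := by
  obtain ⟨K, hK0, hK⟩ := exists_wMom_le_mul_wHat hω hC1 hC
  refine ⟨max 1 (2 * C ^ 2 * K), le_max_left _ _, fun n => ?_⟩
  rcases Nat.eq_zero_or_pos n with rfl | hn
  · simpa using le_mul_of_one_le_left (hω.wMom_pos 0).le (le_max_left 1 (2 * C ^ 2 * K))
  have hn' : (1 : ℝ) ≤ n := by exact_mod_cast hn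
  have hd : 1 / (4 * n : ℝ) ∈ Icc (0 : ℝ) 1 :=
    ⟨by positivity, by rw [div_le_one (by positivity)]; linarith⟩
  have hbern : 1 / 2 ≤ (1 - 1 / (4 * n : ℝ)) ^ (2 * n) := by
    have := one_add_mul_le_pow (a := -(1 / (4 * n : ℝ))) (by linarith [hd.2]) (2 * n)
    rw [← sub_eq_add_neg] at this
    refine le_trans (le_of_eq ?_) this
    push_cast
    field_simp
    ring
  have hlow : wHat ω (1 - 1 / (4 * n)) ≤ 2 * wMom ω (2 * n) := by
    have := hω.pow_mul_wHat_le_wMom ⟨sub_nonneg.2 hd.2, by linarith [hd.1]⟩ (2 * n)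
    nlinarith [hω.wHat_nonneg ⟨sub_nonneg.2 hd.2, by linarith [hd.1]⟩]
  calc wMom ω n ≤ K * wHat ω (1 - 1 / n) := hK n hn
    _ ≤ K * (C ^ 2 * wHat ω (1 - 1 / (4 * n))) := by
        gcongr
        refine wHat_one_sub_le_pow_mul hω hC1 hC 2 (by positivity)
          (by rw [div_le_one (by positivity)]; exact hn') hd.2 ?_
        field_simp
        norm_num
    _ ≤ K * (C ^ 2 * (2 * wMom ω (2 * n))) := by gcongr
    _ = 2 * C ^ 2 * K * wMom ω (2 * n) := by ring
    _ ≤ max 1 (2 * C ^ 2 * K) * wMom ω (2 * n) := by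
        gcongr
        · exact (hω.wMom_pos _).le
        · exact le_max_right _ _

end Doubling

lemma nat_mul_pow_le_inv_one_sub {u : ℝ} (hu0 : 0 ≤ u) (hu1 : u < 1) (k : ℕ) :
    k * u ^ k ≤ (1 - u)⁻¹ :=
  calc k * u ^ k ≤ ∑ i ∈ Finset.range k, u ^ i := by
        simpa using Finset.card_nsmul_le_sum (Finset.range k) (u ^ ·) (u ^ k)
          fun i hi => pow_le_pow_of_le_one hu0 hu1.le (Finset.mem_range.1 hi).le
    _ ≤ u ^ 0 / (1 - u) := by
        simpa using geom_sum_Ico_le_of_lt_one (m := 0) (n := k) hu0 hu1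
    _ = (1 - u)⁻¹ := by rw [pow_zero, one_div]

lemma norm_pow_sub_pow_le {𝕜 : Type*} [NormedField 𝕜] {a b : 𝕜} {t : ℝ} (ha : ‖a‖ ≤ t)
    (hb : ‖b‖ ≤ t) (n : ℕ) : ‖a ^ n - b ^ n‖ ≤ n * t ^ (n - 1) * ‖a - b‖ := by
  have ht : 0 ≤ t := (norm_nonneg a).trans ha
  rw [← geom_sum₂_mul, norm_mul]
  refine mul_le_mul_of_nonneg_right ?_ (norm_nonneg _)
  calc ‖∑ i ∈ Finset.range n, a ^ i * b ^ (n - 1 - i)‖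
      ≤ ∑ i ∈ Finset.range n, ‖a ^ i * b ^ (n - 1 - i)‖ := norm_sum_le _ _
    _ ≤ ∑ _i ∈ Finset.range n, t ^ (n - 1) := by
        refine Finset.sum_le_sum fun i hi => ?_
        rw [norm_mul, norm_pow, norm_pow, ← pow_mul_pow_sub t (Nat.le_sub_one_of_lt
          (Finset.mem_range.1 hi))]
        gcongr
    _ = n * t ^ (n - 1) := by rw [Finset.sum_const, Finset.card_range, nsmul_eq_mul]

section PowerSeries

variable {c : ℕ → ℝ} (hc : ∀ k, 0 ≤ c k)
include hc

lemma nat_mul_sq_pow_mul_le {u : ℝ} (hu0 : 0 ≤ u) (hu1 : u < 1) (k : ℕ) :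
    k * (u ^ 2) ^ k * c k ≤ (1 - u)⁻¹ * (u ^ k * c k) := by
  calc k * (u ^ 2) ^ k * c k = (k * u ^ k) * (u ^ k * c k) := by ring
    _ ≤ (1 - u)⁻¹ * (u ^ k * c k) := mul_le_mul_of_nonneg_right
        (nat_mul_pow_le_inv_one_sub hu0 hu1 k) (mul_nonneg (pow_nonneg hu0 k) (hc k))

lemma summable_nat_mul_sq_pow_mul {u : ℝ} (hu0 : 0 ≤ u) (hu1 : u < 1)
    (hs : Summable fun k => u ^ k * c k) : Summable fun k => k * (u ^ 2) ^ k * c k :=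
  (hs.mul_left _).of_nonneg_of_le (fun k => by have := hc k; positivity)
    (nat_mul_sq_pow_mul_le hc hu0 hu1)

lemma tsum_nat_mul_sq_pow_mul_le {u : ℝ} (hu0 : 0 ≤ u) (hu1 : u < 1)
    (hs : Summable fun k => u ^ k * c k) :
    ∑' k, k * (u ^ 2) ^ k * c k ≤ (1 - u)⁻¹ * ∑' k, u ^ k * c k := by
  rw [← tsum_mul_left]
  exact (summable_nat_mul_sq_pow_mul hc hu0 hu1 hs).tsum_le_tsum
    (nat_mul_sq_pow_mul_le hc hu0 hu1) (hs.mul_left _)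

lemma norm_tsum_pow_mul_sub_tsum_pow_mul_le {a b : ℂ} {t δ : ℝ} (ha : ‖a‖ ≤ t) (hb : ‖b‖ ≤ t)
    (hab : ‖a - b‖ ≤ t * δ) (hs : Summable fun k => t ^ k * c k)
    (hsd : Summable fun k => k * t ^ k * c k) :
    ‖∑' k, a ^ k * (c k : ℂ) - ∑' k, b ^ k * (c k : ℂ)‖ ≤ δ * ∑' k, k * t ^ k * c k := by
  have ht : 0 ≤ t := (norm_nonneg a).trans ha
  have hsummable {x : ℂ} (hx : ‖x‖ ≤ t) : Summable fun k => x ^ k * (c k : ℂ) :=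
    Summable.of_norm_bounded hs fun k => by
      rw [norm_mul, norm_pow, Complex.norm_real, Real.norm_of_nonneg (hc k)]
      gcongr
      exact hc k
  have hterm : ∀ k : ℕ, ‖(a ^ k - b ^ k) * (c k : ℂ)‖ ≤ δ * (k * t ^ k * c k) := fun k =>
    calc ‖(a ^ k - b ^ k) * (c k : ℂ)‖ = ‖a ^ k - b ^ k‖ * c k := by
          rw [norm_mul, Complex.norm_real, Real.norm_of_nonneg (hc k)]
      _ ≤ k * t ^ (k - 1) * (t * δ) * c k := by
          gcongr
          · exact hc k
          · exact (norm_pow_sub_pow_le ha hb k).trans (by gcongr)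
      _ = δ * (k * t ^ k * c k) := by
          rcases k with _ | k
          · simp
          · rw [Nat.add_sub_cancel, pow_succ]
            ring
  have hsn : Summable fun k => ‖(a ^ k - b ^ k) * (c k : ℂ)‖ :=
    (hsd.mul_left δ).of_nonneg_of_le (fun k => norm_nonneg _) hterm
  rw [← (hsummable ha).tsum_sub (hsummable hb)]
  calc ‖∑' k, (a ^ k * (c k : ℂ) - b ^ k * (c k : ℂ))‖
      = ‖∑' k, (a ^ k - b ^ k) * (c k : ℂ)‖ := by simp only [sub_mul]
    _ ≤ ∑' k, ‖(a ^ k - b ^ k) * (c k : ℂ)‖ := norm_tsum_le_tsum_norm hsn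
    _ ≤ ∑' k, δ * (k * t ^ k * c k) := hsn.tsum_le_tsum hterm (hsd.mul_left δ)
    _ = δ * ∑' k, k * t ^ k * c k := tsum_mul_left

lemma tsum_pow_mul_le_two_mul_tsum_sq_pow_mul {E : ℝ} (hcE : ∀ k, c k ≤ E * c (k / 2))
    {u : ℝ} (hu0 : 0 ≤ u) (hu1 : u ≤ 1) (hs : Summable fun k => u ^ k * c k) :
    ∑' k, u ^ k * c k ≤ 2 * E * ∑' k, (u ^ 2) ^ k * c k := by
  have hs2 : Summable fun k => (u ^ 2) ^ k * c k :=
    hs.of_nonneg_of_le (fun k => by have := hc k; positivity) fun k => by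
      gcongr
      · exact hc k
      · nlinarith
  have heven : Summable fun k => u ^ (2 * k) * c (2 * k) :=
    hs.comp_injective fun a b h => by simpa using h
  have hodd : Summable fun k => u ^ (2 * k + 1) * c (2 * k + 1) :=
    hs.comp_injective fun a b h => by simpa using h
  calc ∑' k, u ^ k * c k
      = ∑' k, u ^ (2 * k) * c (2 * k) + ∑' k, u ^ (2 * k + 1) * c (2 * k + 1) :=
        (tsum_even_add_odd (f := fun k => u ^ k * c k) heven hodd).symm
    _ ≤ ∑' k, E * ((u ^ 2) ^ k * c k) + ∑' k, E * ((u ^ 2) ^ k * c k) := by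
        refine add_le_add (heven.tsum_le_tsum (fun k => ?_) (hs2.mul_left E))
          (hodd.tsum_le_tsum (fun k => ?_) (hs2.mul_left E))
        · have := hcE (2 * k)
          rw [Nat.mul_div_cancel_left k two_pos] at this
          rw [pow_mul]
          nlinarith [pow_nonneg (pow_nonneg hu0 2) k]
        · have := hcE (2 * k + 1)
          rw [show (2 * k + 1) / 2 = k by omega] at this
          calc u ^ (2 * k + 1) * c (2 * k + 1) ≤ (u ^ 2) ^ k * c (2 * k + 1) := by
                rw [← pow_mul]
                exact mul_le_mul_of_nonneg_right
                  (pow_le_pow_of_le_one hu0 hu1 (Nat.le_succ _)) (hc _)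
            _ ≤ E * ((u ^ 2) ^ k * c k) := by
                nlinarith [pow_nonneg (pow_nonneg hu0 2) k]
    _ = 2 * E * ∑' k, (u ^ 2) ^ k * c k := by rw [tsum_mul_left]; ring

lemma tsum_nat_mul_pow_mul_le {E : ℝ} (hE : 0 ≤ E) (hcE : ∀ k, c k ≤ E * c (k / 2))
    (hs : ∀ u, 0 ≤ u → u < 1 → Summable fun k => u ^ k * c k) {t : ℝ} (ht0 : 0 ≤ t)
    (ht1 : t < 1) :
    Summable (fun k => k * t ^ k * c k) ∧
      ∑' k, k * t ^ k * c k ≤ 8 * E ^ 2 / (1 - t) * ∑' k, (t ^ 2) ^ k * c k := by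
  set u := √t
  have hu0 : 0 ≤ u := Real.sqrt_nonneg t
  have hut : u ^ 2 = t := Real.sq_sqrt ht0
  have hu1 : u < 1 := by nlinarith
  have hinv : (1 - u)⁻¹ ≤ 2 / (1 - t) := by
    rw [inv_eq_one_div, div_le_div_iff₀ (by linarith) (by linarith)]
    nlinarith
  have hnonneg : 0 ≤ ∑' k, ((u ^ 2) ^ 2) ^ k * c k :=
    tsum_nonneg fun k => mul_nonneg (by positivity) (hc k)
  rw [← hut]
  refine ⟨summable_nat_mul_sq_pow_mul hc hu0 hu1 (hs u hu0 hu1), ?_⟩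
  calc ∑' k, k * (u ^ 2) ^ k * c k ≤ (1 - u)⁻¹ * ∑' k, u ^ k * c k :=
        tsum_nat_mul_sq_pow_mul_le hc hu0 hu1 (hs u hu0 hu1)
    _ ≤ (1 - u)⁻¹ * (2 * E * (2 * E * ∑' k, ((u ^ 2) ^ 2) ^ k * c k)) := by
        refine mul_le_mul_of_nonneg_left ?_ (inv_nonneg.2 (by linarith))
        refine (tsum_pow_mul_le_two_mul_tsum_sq_pow_mul hc hcE hu0 hu1.le (hs u hu0 hu1)).trans ?_
        refine mul_le_mul_of_nonneg_left ?_ (by positivity)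
        exact tsum_pow_mul_le_two_mul_tsum_sq_pow_mul hc hcE (by positivity) (by nlinarith)
          (hs _ (by positivity) (by nlinarith))
    _ ≤ 2 / (1 - t) * (2 * E * (2 * E * ∑' k, ((u ^ 2) ^ 2) ^ k * c k)) :=
        mul_le_mul_of_nonneg_right hinv (by have := mul_nonneg hE hnonneg; positivity)
    _ = 8 * E ^ 2 / (1 - u ^ 2) * ∑' k, ((u ^ 2) ^ 2) ^ k * c k := by rw [hut]; ring

end PowerSeries

def kernelCoeff (ω : ℝ → ℝ) (k : ℕ) : ℝ := (2 * wMom ω (2 * k + 1))⁻¹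

lemma wBk_eq_tsum (ω : ℝ → ℝ) (z w : ℂ) :
    wBk ω z w = ∑' k, (w * (starRingEnd ℂ) z) ^ k * (kernelCoeff ω k : ℂ) := by
  rw [wBk, ← tsum_mul_left]
  congr 1 with k
  rw [kernelCoeff]
  push_cast
  ring

lemma wBkDiag_eq_tsum (ω : ℝ → ℝ) (z : ℂ) :
    wBkDiag ω z = ∑' k, (‖z‖ ^ 2) ^ k * kernelCoeff ω k := by
  rw [wBkDiag]
  congr 1 with k
  rw [kernelCoeff, ← pow_mul, div_eq_mul_inv]

namespace IsRadialWeight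

variable (hω : IsRadialWeight ω)
include hω

lemma kernelCoeff_pos (k : ℕ) : 0 < kernelCoeff ω k := by
  have := hω.wMom_pos (2 * k + 1)
  rw [kernelCoeff]
  positivity

lemma wBkDiag_nonneg (z : ℂ) : 0 ≤ wBkDiag ω z := by
  rw [wBkDiag_eq_tsum]
  exact tsum_nonneg fun k => mul_nonneg (by positivity) (hω.kernelCoeff_pos k).le

lemma summable_pow_mul_kernelCoeff {u : ℝ} (hu0 : 0 ≤ u) (hu1 : u < 1) :
    Summable fun k => u ^ k * kernelCoeff ω k := by
  -- `ω_{2k+1} ≥ ρ^{2k+1} ω̂(ρ)` makes the series geometric as soon as `u < ρ²`.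
  set ρ := (1 + u) / 2 with hρdef
  have hρ : ρ ∈ Icc (0 : ℝ) 1 := ⟨by positivity, by linarith⟩
  have hρpos : 0 < ρ := by positivity
  have hρu : u < ρ ^ 2 := by nlinarith
  have hwρ : 0 < wHat ω ρ := hω.wHat_pos_s16 hρ.1 (by linarith)
  have hratio : u / ρ ^ 2 < 1 := (div_lt_one (by positivity)).2 hρu
  refine ((summable_geometric_of_lt_one (by positivity) hratio).mul_left
    (2 * ρ * wHat ω ρ)⁻¹).of_nonneg_of_le
    (fun k => mul_nonneg (pow_nonneg hu0 k) (hω.kernelCoeff_pos k).le) fun k => ?_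
  have hmom := hω.pow_mul_wHat_le_wMom hρ (2 * k + 1)
  rw [kernelCoeff, div_pow, ← pow_mul, mul_comm 2 k, ← mul_div_assoc, mul_comm _ (u ^ k),
    mul_div_assoc]
  refine mul_le_mul_of_nonneg_left ?_ (pow_nonneg hu0 k)
  rw [div_eq_mul_inv, ← mul_inv]
  refine inv_anti₀ (by positivity) ?_
  rw [mul_comm k 2]
  calc 2 * ρ * wHat ω ρ * ρ ^ (2 * k) = 2 * (ρ ^ (2 * k + 1) * wHat ω ρ) := by ring
    _ ≤ 2 * wMom ω (2 * k + 1) := by linarith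

lemma exists_kernelCoeff_le_mul_kernelCoeff_div_two (hd : IsDoubling ω) :
    ∃ E, 1 ≤ E ∧ ∀ k, kernelCoeff ω k ≤ E * kernelCoeff ω (k / 2) := by
  obtain ⟨C, hC1, hC⟩ := hω.exists_one_le_doubling_const hd
  obtain ⟨D, hD1, hD⟩ := exists_wMom_le_mul_wMom_two_mul hω hC1 hC
  refine ⟨D ^ 2, one_le_pow₀ hD1, fun k => ?_⟩
  have hmom : wMom ω (2 * (k / 2) + 1) ≤ D ^ 2 * wMom ω (2 * k + 1) :=
    calc wMom ω (2 * (k / 2) + 1) ≤ D * (D * wMom ω (2 * (2 * (2 * (k / 2) + 1)))) :=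
          (hD _).trans (mul_le_mul_of_nonneg_left (hD _) (by linarith))
      _ ≤ D * (D * wMom ω (2 * k + 1)) := by
          gcongr
          exact hω.wMom_antitone (by omega)
      _ = D ^ 2 * wMom ω (2 * k + 1) := by ring
  have hpos := hω.wMom_pos (2 * k + 1)
  have hpos' := hω.wMom_pos (2 * (k / 2) + 1)
  rw [kernelCoeff, kernelCoeff, ← div_eq_mul_inv, le_div_iff₀ (by positivity),
    inv_mul_le_iff₀ (by positivity)]
  linarith

lemma norm_wBk_sub_wBkDiag_le {E : ℝ} (hE : 0 ≤ E)
    (hcE : ∀ k, kernelCoeff ω k ≤ E * kernelCoeff ω (k / 2)) {z w : ℂ} (hz : ‖z‖ < 1)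
    (hw : ‖w‖ ≤ 1) :
    ‖wBk ω z w - wBkDiag ω z‖ ≤ ‖w - z‖ * (8 * E ^ 2 / (1 - ‖z‖)) * wBkDiag ω z := by
  have hc : ∀ k, 0 ≤ kernelCoeff ω k := fun k => (hω.kernelCoeff_pos k).le
  have hs : ∀ u, 0 ≤ u → u < 1 → Summable fun k => u ^ k * kernelCoeff ω k :=
    fun _ => hω.summable_pow_mul_kernelCoeff
  obtain ⟨hsd, hsum⟩ := tsum_nat_mul_pow_mul_le hc hE hcE hs (norm_nonneg z) hz
  have hconj : (starRingEnd ℂ) z * z = ((‖z‖ ^ 2 : ℝ) : ℂ) := by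
    rw [Complex.conj_mul']
    push_cast
    rfl
  have hdiag : (wBkDiag ω z : ℂ) = ∑' k, ((‖z‖ ^ 2 : ℝ) : ℂ) ^ k * (kernelCoeff ω k : ℂ) := by
    rw [wBkDiag_eq_tsum, Complex.ofReal_tsum]
    push_cast
    rfl
  rw [wBk_eq_tsum, hdiag]
  refine (norm_tsum_pow_mul_sub_tsum_pow_mul_le hc (δ := ‖w - z‖) ?_ ?_ ?_
    (hs _ (norm_nonneg z) hz) hsd).trans ?_
  · rw [norm_mul, Complex.norm_conj]
    exact mul_le_of_le_one_left (norm_nonneg z) hw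
  · rw [Complex.norm_real, Real.norm_of_nonneg (by positivity)]
    nlinarith [norm_nonneg z]
  · rw [← hconj, show w * (starRingEnd ℂ) z - (starRingEnd ℂ) z * z
      = (starRingEnd ℂ) z * (w - z) by ring, norm_mul, Complex.norm_conj]
  · calc ‖w - z‖ * ∑' k, k * ‖z‖ ^ k * kernelCoeff ω k
        ≤ ‖w - z‖ * (8 * E ^ 2 / (1 - ‖z‖) * ∑' k, (‖z‖ ^ 2) ^ k * kernelCoeff ω k) := by
          gcongr
      _ = ‖w - z‖ * (8 * E ^ 2 / (1 - ‖z‖)) * wBkDiag ω z := by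
          rw [wBkDiag_eq_tsum]
          ring

end IsRadialWeight

lemma norm_sub_lt_norm_one_sub_conj_mul {z w : ℂ} (hz : ‖z‖ < 1) (hw : ‖w‖ < 1) :
    ‖z - w‖ < ‖1 - (starRingEnd ℂ) z * w‖ := by
  have hid : Complex.normSq (1 - (starRingEnd ℂ) z * w) - Complex.normSq (z - w)
      = (1 - Complex.normSq z) * (1 - Complex.normSq w) := by
    simp only [Complex.normSq_apply, Complex.sub_re, Complex.sub_im, Complex.mul_re,
      Complex.mul_im, Complex.one_re, Complex.one_im, Complex.conj_re, Complex.conj_im]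
    ring
  rw [← sq_lt_sq₀ (norm_nonneg _) (norm_nonneg _), ← Complex.normSq_eq_norm_sq,
    ← Complex.normSq_eq_norm_sq]
  rw [Complex.normSq_eq_norm_sq z, Complex.normSq_eq_norm_sq w] at hid
  nlinarith [mul_pos (by nlinarith [norm_nonneg z] : 0 < 1 - ‖z‖ ^ 2)
    (by nlinarith [norm_nonneg w] : 0 < 1 - ‖w‖ ^ 2)]

lemma pRho_lt_one {z w : ℂ} (hz : ‖z‖ < 1) (hw : ‖w‖ < 1) : pRho z w < 1 := by
  have h := norm_sub_lt_norm_one_sub_conj_mul hz hw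
  rw [pRho, norm_div, div_lt_one ((norm_nonneg _).trans_lt h)]
  exact h

lemma pRho_lt_of_bDist_lt {z w : ℂ} (hz : ‖z‖ < 1) (hw : ‖w‖ < 1) {ρ : ℝ}
    (hρ : ρ ∈ Ioo (0 : ℝ) 1) (h : bDist z w < 1 / 2 * Real.log ((1 + ρ) / (1 - ρ))) :
    pRho z w < ρ := by
  by_contra! hle
  have h1 := pRho_lt_one hz hw
  have : (1 + ρ) / (1 - ρ) ≤ (1 + pRho z w) / (1 - pRho z w) := by
    rw [div_le_div_iff₀ (by linarith [hρ.2]) (by linarith)]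
    nlinarith
  have := Real.log_le_log (div_pos (by linarith [hρ.1]) (by linarith [hρ.2])) this
  rw [bDist] at h
  linarith

lemma norm_sub_le_of_pRho_lt {z w : ℂ} (hz : ‖z‖ < 1) (hw : ‖w‖ < 1) {ρ : ℝ} (hρ : 0 ≤ ρ)
    (hρ2 : ρ ≤ 1 / 2) (h : pRho z w < ρ) : ‖w - z‖ ≤ 4 * ρ * (1 - ‖z‖) := by
  have hden := norm_sub_lt_norm_one_sub_conj_mul hz hw
  have hzw : ‖z - w‖ ≤ ρ * ‖1 - (starRingEnd ℂ) z * w‖ := by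
    rw [pRho, norm_div, div_lt_iff₀ ((norm_nonneg _).trans_lt hden)] at h
    exact h.le
  have htri : ‖1 - (starRingEnd ℂ) z * w‖ ≤ (1 - ‖z‖ ^ 2) + ‖z‖ * ‖z - w‖ := by
    have hzz : (1 : ℂ) - (starRingEnd ℂ) z * z = ((1 - ‖z‖ ^ 2 : ℝ) : ℂ) := by
      rw [Complex.conj_mul']
      push_cast
      ring
    calc ‖1 - (starRingEnd ℂ) z * w‖
        = ‖(1 - (starRingEnd ℂ) z * z) + (starRingEnd ℂ) z * (z - w)‖ := by ring_nf
      _ ≤ ‖1 - (starRingEnd ℂ) z * z‖ + ‖(starRingEnd ℂ) z * (z - w)‖ := norm_add_le _ _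
      _ = (1 - ‖z‖ ^ 2) + ‖z‖ * ‖z - w‖ := by
          rw [hzz, Complex.norm_real, Real.norm_of_nonneg (by nlinarith [norm_nonneg z]),
            norm_mul, Complex.norm_conj]
  have hz' : ‖z‖ * ‖z - w‖ ≤ ‖z - w‖ := mul_le_of_le_one_left (norm_nonneg _) hz.le
  have hsq : 1 - ‖z‖ ^ 2 ≤ 2 * (1 - ‖z‖) := by nlinarith [norm_nonneg z]
  have hkey : (1 - ρ) * ‖z - w‖ ≤ 2 * ρ * (1 - ‖z‖) := by
    nlinarith [mul_le_mul_of_nonneg_left htri hρ, mul_le_mul_of_nonneg_left hz' hρ,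
      mul_le_mul_of_nonneg_left hsq hρ]
  rw [norm_sub_rev]
  nlinarith [norm_nonneg (z - w)]

lemma inv_two_mul_le_norm_and_norm_le_two_mul {B : ℂ} {S : ℝ} (hS : 0 ≤ S)
    (h : ‖B - S‖ ≤ S / 2) : 2⁻¹ * S ≤ ‖B‖ ∧ ‖B‖ ≤ 2 * S := by
  have hlow := norm_sub_norm_le (S : ℂ) B
  have hup := norm_le_norm_add_norm_sub' B (S : ℂ)
  rw [norm_sub_rev, Complex.norm_of_nonneg hS] at hlow
  rw [Complex.norm_of_nonneg hS] at hup
  constructor <;> linarith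

/-- For `ω ∈ D` there are `r > 0` and `C ≥ 1` with
`C⁻¹ B_z^ω(z) ≤ |B_z^ω(w)| ≤ C B_z^ω(z)` for all `z ∈ 𝔻` and `w ∈ D(z,r)`. -/
theorem statement16 (ω : ℝ → ℝ) (hω : IsRadialWeight ω) (hD : IsDD ω) :
    ∃ r : ℝ, 0 < r ∧ ∃ C : ℝ, 1 ≤ C ∧ ∀ z ∈ uD, ∀ w ∈ bDisk z r,
      C⁻¹ * wBkDiag ω z ≤ ‖wBk ω z w‖ ∧
      ‖wBk ω z w‖ ≤ C * wBkDiag ω z := by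
  obtain ⟨E, hE1, hcE⟩ := hω.exists_kernelCoeff_le_mul_kernelCoeff_div_two hD.1
  set ρ : ℝ := (64 * E ^ 2)⁻¹
  have hρ0 : 0 < ρ := by positivity
  have hρE : ρ * (64 * E ^ 2) = 1 := inv_mul_cancel₀ (by positivity)
  have hρ2 : ρ ≤ 1 / 2 := by nlinarith
  refine ⟨1 / 2 * Real.log ((1 + ρ) / (1 - ρ)), ?_, 2, one_le_two, fun z hz w ⟨hw, hwz⟩ => ?_⟩
  · exact mul_pos one_half_pos (Real.log_pos ((one_lt_div (by linarith)).2 (by linarith)))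
  rw [uD, mem_ball_zero_iff] at hz hw
  have hnear : ‖w - z‖ ≤ 4 * ρ * (1 - ‖z‖) := norm_sub_le_of_pRho_lt hz hw hρ0.le hρ2
    (pRho_lt_of_bDist_lt hz hw ⟨hρ0, by linarith⟩ hwz)
  have hS := hω.wBkDiag_nonneg z
  refine inv_two_mul_le_norm_and_norm_le_two_mul hS ?_
  calc ‖wBk ω z w - wBkDiag ω z‖ ≤ ‖w - z‖ * (8 * E ^ 2 / (1 - ‖z‖)) * wBkDiag ω z :=
        hω.norm_wBk_sub_wBkDiag_le (by linarith) hcE hz hw.le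
    _ ≤ 4 * ρ * (1 - ‖z‖) * (8 * E ^ 2 / (1 - ‖z‖)) * wBkDiag ω z := by gcongr
    _ = wBkDiag ω z / 2 := by
        field_simp [show 1 - ‖z‖ ≠ 0 by linarith]
        linear_combination wBkDiag ω z * hρE
end
end
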